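/- arXiv:1609.07345 — 2 statements merged into one kernel-verified Lean document; each statement's English description precedes it below -/
import Mathlib

section
/- For every natural number k ≥ 1, there exists a graph G with at least 2 vertices such that st_D(G) = k. -/
open SimpleGraph

/-- The distinguishing number of a graph: the least `d` such that there is a vertex
labeling with `d` labels preserved only by the trivial automorphism. -/
noncomputable def distNum {V : Type*} (G : SimpleGraph V) : ℕ :=
  sInf {d : ℕ | ∃ f : V → Fin d, ∀ φ : G ≃g G, (∀ x, f (φ x) = f x) → ∀ x, φ x = x}

/-- The distinguishing stability of a graph: the minimum cardinality of a proper subset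
`S` of the vertex set whose removal changes the distinguishing number. -/
noncomputable def stD {V : Type*} (G : SimpleGraph V) : ℕ :=
  sInf {k : ℕ | ∃ S : Set V, S ≠ Set.univ ∧ S.ncard = k ∧
    distNum (G.induce Sᶜ) ≠ distNum G}

/-- The distinguishing bondage number of a graph: the minimum cardinality of a set
of edges whose removal changes the distinguishing number. -/
noncomputable def bD {V : Type*} (G : SimpleGraph V) : ℕ :=
  sInf {k : ℕ | ∃ F : Set (Sym2 V), F ⊆ G.edgeSet ∧ F.ncard = k ∧
    distNum (G.deleteEdges F) ≠ distNum G}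

/-!
Take `G = (k + 1) K_{k+1}`, the cluster graph of `Prod.fst` on `Fin (k + 1) × Fin (k + 1)`.
In a distinguishing labeling of a disjoint union of cliques every clique gets pairwise distinct
labels, and two cliques cannot get the same label set (otherwise swapping them along the labels
is a nontrivial automorphism). Hence two cliques of size `m` force at least `m + 1` labels, while
giving the cliques cyclic windows of consecutive labels modulo `M` shows that `M` labels suffice
as long as no two cliques of size `M` occur. So `D(G) = k + 2`; removing fewer than `k` vertices
leaves two intact copies of `K_{k+1}` and keeps `D = k + 2`, whereas removing one vertex from
each of `k` cliques leaves `k K_k ∪ K_{k+1}`, which has `D = k + 1`.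
-/

variable {V W C L : Type*}

def IsDistinguishing (G : SimpleGraph V) (f : V → L) : Prop :=
  ∀ φ : G ≃g G, (∀ x, f (φ x) = f x) → ∀ x, φ x = x

section DistinguishingNumber

variable {G : SimpleGraph V}

lemma IsDistinguishing.comp_injective {L' : Type*} {f : V → L} (hf : IsDistinguishing G f)
    {g : L → L'} (hg : g.Injective) : IsDistinguishing G (g ∘ f) :=
  fun φ hφ => hf φ fun x => hg (hφ x)

lemma distNum_le_card [Fintype L] {f : V → L} (hf : IsDistinguishing G f) :
    distNum G ≤ Fintype.card L :=
  Nat.sInf_le ⟨_, hf.comp_injective (Fintype.equivFin L).injective⟩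

lemma exists_isDistinguishing_fin_distNum [Finite V] :
    ∃ f : V → Fin (distNum G), IsDistinguishing G f :=
  Nat.sInf_mem (s := {d | ∃ f : V → Fin d, IsDistinguishing G f})
    ⟨_, Finite.equivFin V, fun _ hφ x => (Finite.equivFin V).injective (hφ x)⟩

lemma lt_distNum [Finite V] {d : ℕ} (h : ∀ f : V → Fin d, ¬ IsDistinguishing G f) :
    d < distNum G := by
  obtain ⟨f, hf⟩ := exists_isDistinguishing_fin_distNum (G := G)
  by_contra! hle
  exact h _ (hf.comp_injective (Fin.castLE_injective hle))

end DistinguishingNumber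

def clusterGraph (c : W → C) : SimpleGraph W where
  Adj x y := x ≠ y ∧ c x = c y
  symm := ⟨fun _ _ h => ⟨h.1.symm, h.2.symm⟩⟩
  loopless := ⟨fun _ h => h.1 rfl⟩

namespace clusterGraph

variable {c : W → C}

@[simp]
lemma adj_iff {x y : W} : (clusterGraph c).Adj x y ↔ x ≠ y ∧ c x = c y := Iff.rfl

lemma induce (s : Set W) : (clusterGraph c).induce s = clusterGraph (c ∘ Subtype.val) := by
  ext x y
  simp [Subtype.coe_ne_coe]

lemma apply_iso_eq_iff (φ : clusterGraph c ≃g clusterGraph c) (x y : W) :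
    c (φ x) = c (φ y) ↔ c x = c y := by
  rcases eq_or_ne x y with rfl | hxy
  · simp
  · simpa [hxy, φ.injective.ne hxy] using φ.map_adj_iff (v := x) (w := y)

def isoOfPerm (e : Equiv.Perm W) (he : ∀ x y, c (e x) = c (e y) ↔ c x = c y) :
    clusterGraph c ≃g clusterGraph c :=
  ⟨e, fun {x y} => by simp [he, e.injective.ne_iff]⟩

@[simp]
lemma isoOfPerm_apply (e : Equiv.Perm W) (he : ∀ x y, c (e x) = c (e y) ↔ c x = c y) (x : W) :
    isoOfPerm e he x = e x := rfl

lemma _root_.IsDistinguishing.injOn_fiber {f : W → L}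
    (hf : IsDistinguishing (clusterGraph c) f) (a : C) : Set.InjOn f (c ⁻¹' {a}) := by
  classical
  intro x hx y hy hxy
  have hswap := Equiv.apply_swap_eq_self (v := c) (hx.trans hy.symm)
  have := hf (isoOfPerm (Equiv.swap x y) (by simp [hswap])) (Equiv.apply_swap_eq_self hxy) x
  simpa [eq_comm] using this

lemma _root_.IsDistinguishing.ncard_fiber_le [Finite L] {f : W → L}
    (hf : IsDistinguishing (clusterGraph c) f) (a : C) : (c ⁻¹' {a}).ncard ≤ Nat.card L := by
  rw [← Set.ncard_univ]
  exact Set.ncard_le_ncard_of_injOn f (fun _ _ => Set.mem_univ _) (hf.injOn_fiber a)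

lemma exists_iso_swap_fibers {f : W → L} {a b : C} (hab : a ≠ b) (ha : (c ⁻¹' {a}).Nonempty)
    (hfa : Set.InjOn f (c ⁻¹' {a})) (hfb : Set.InjOn f (c ⁻¹' {b}))
    (himg : f '' (c ⁻¹' {a}) = f '' (c ⁻¹' {b})) :
    ∃ φ : clusterGraph c ≃g clusterGraph c, (∀ x, f (φ x) = f x) ∧
      ∀ x ∈ c ⁻¹' {a}, φ x ∈ c ⁻¹' {b} := by
  classical
  have : Nonempty W := ha.to_subtype.map Subtype.val
  let g : W → W := fun x =>
    if c x = a then Function.invFunOn f (c ⁻¹' {b}) (f x)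
    else if c x = b then Function.invFunOn f (c ⁻¹' {a}) (f x) else x
  have hga : ∀ x ∈ c ⁻¹' {a}, g x ∈ c ⁻¹' {b} ∧ f (g x) = f x := fun x hx => by
    have hmem : f x ∈ f '' (c ⁻¹' {b}) := himg ▸ Set.mem_image_of_mem f hx
    simp only [g, if_pos (show c x = a from hx)]
    exact ⟨Function.invFunOn_mem hmem, Function.invFunOn_eq hmem⟩
  have hgb : ∀ x ∈ c ⁻¹' {b}, g x ∈ c ⁻¹' {a} ∧ f (g x) = f x := fun x hx => by
    have hmem : f x ∈ f '' (c ⁻¹' {a}) := himg ▸ Set.mem_image_of_mem f hx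
    simp only [g, if_neg (show c x ≠ a from fun h => hab (h.symm.trans hx)),
      if_pos (show c x = b from hx)]
    exact ⟨Function.invFunOn_mem hmem, Function.invFunOn_eq hmem⟩
  have hgo : ∀ x, c x ≠ a → c x ≠ b → g x = x := fun x h₁ h₂ => by simp [g, h₁, h₂]
  have hinv : Function.Involutive g := by
    intro x
    by_cases hxa : c x = a
    · obtain ⟨hgx, hfgx⟩ := hga x hxa
      obtain ⟨hggx, hfggx⟩ := hgb _ hgx
      exact hfa hggx hxa (hfggx.trans hfgx)
    by_cases hxb : c x = b
    · obtain ⟨hgx, hfgx⟩ := hgb x hxb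
      obtain ⟨hggx, hfggx⟩ := hga _ hgx
      exact hfb hggx hxb (hfggx.trans hfgx)
    · rw [hgo x hxa hxb, hgo x hxa hxb]
  have hg : ∀ x, c (g x) = Equiv.swap a b (c x) ∧ f (g x) = f x := by
    intro x
    by_cases hxa : c x = a
    · rw [hxa, Equiv.swap_apply_left]; exact hga x hxa
    by_cases hxb : c x = b
    · rw [hxb, Equiv.swap_apply_right]; exact hgb x hxb
    · rw [hgo x hxa hxb, Equiv.swap_apply_of_ne_of_ne hxa hxb]; exact ⟨rfl, rfl⟩
  refine ⟨isoOfPerm (hinv.toPerm g) fun x y => ?_, fun x => (hg x).2, fun x hx => (hga x hx).1⟩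
  simp [hg]

lemma not_isDistinguishing_of_image_eq {f : W → L} {a b : C} (hab : a ≠ b)
    (ha : (c ⁻¹' {a}).Nonempty) (hfa : Set.InjOn f (c ⁻¹' {a})) (hfb : Set.InjOn f (c ⁻¹' {b}))
    (himg : f '' (c ⁻¹' {a}) = f '' (c ⁻¹' {b})) : ¬ IsDistinguishing (clusterGraph c) f := by
  intro hf
  obtain ⟨φ, hφf, hφab⟩ := exists_iso_swap_fibers hab ha hfa hfb himg
  obtain ⟨x, hx⟩ := ha
  have hxb : c x = b := hf φ hφf x ▸ hφab x hx
  exact hab (hx.symm.trans hxb)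

lemma isDistinguishing_of_injective_image {f : W → L} (hinj : ∀ a, Set.InjOn f (c ⁻¹' {a}))
    (himg : Function.Injective fun a => f '' (c ⁻¹' {a})) :
    IsDistinguishing (clusterGraph c) f := by
  intro φ hφ x
  have hmaps : φ '' (c ⁻¹' {c x}) = c ⁻¹' {c (φ x)} := by
    ext z
    constructor
    · rintro ⟨y, hy, rfl⟩
      exact (apply_iso_eq_iff φ y x).2 hy
    · intro hz
      obtain ⟨y, rfl⟩ := φ.surjective z
      exact ⟨y, (apply_iso_eq_iff φ y x).1 hz, rfl⟩
  have hcolor : c (φ x) = c x := himg <| by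
    simp only [← hmaps, Set.image_image, hφ]
  exact hinj (c x) hcolor rfl (hφ x)

lemma exists_isDistinguishing_of_finset [Finite W] (T : C → Finset L)
    (hT : Function.Injective T) (hcard : ∀ a, (T a).card = (c ⁻¹' {a}).ncard) :
    ∃ f : W → L, IsDistinguishing (clusterGraph c) f := by
  have e : ∀ a, c ⁻¹' {a} ≃ T a := fun a => Classical.choice <| Finite.card_eq.1 <| by
    rw [Nat.card_coe_set_eq, Nat.card_eq_fintype_card, Fintype.card_coe, hcard]
  let f : W → L := fun x => e (c x) ⟨x, rfl⟩
  have hf : ∀ a x (hx : c x = a), f x = e a ⟨x, hx⟩ := by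
    rintro a x rfl
    rfl
  have himg : ∀ a, f '' (c ⁻¹' {a}) = T a := by
    intro a
    ext l
    constructor
    · rintro ⟨x, hx, rfl⟩
      rw [hf a x hx]
      exact (e a _).2
    · intro hl
      refine ⟨((e a).symm ⟨l, hl⟩).1, ((e a).symm ⟨l, hl⟩).2, ?_⟩
      rw [hf a _ ((e a).symm ⟨l, hl⟩).2]
      simp
  refine ⟨f, isDistinguishing_of_injective_image (fun a x hx y hy hxy => ?_) fun a b hab => ?_⟩
  · rw [hf a x hx, hf a y hy] at hxy
    exact congrArg Subtype.val ((e a).injective (Subtype.ext hxy))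
  · simp only [himg, Finset.coe_inj] at hab
    exact hT hab

variable [Finite W]

lemma ncard_fiber_le_distNum (a : C) : (c ⁻¹' {a}).ncard ≤ distNum (clusterGraph c) := by
  obtain ⟨f, hf⟩ := exists_isDistinguishing_fin_distNum (G := clusterGraph c)
  simpa using hf.ncard_fiber_le a

lemma ncard_fiber_lt_distNum {a b : C} (hab : a ≠ b) (ha : (c ⁻¹' {a}).Nonempty)
    (hsize : (c ⁻¹' {a}).ncard = (c ⁻¹' {b}).ncard) :
    (c ⁻¹' {a}).ncard < distNum (clusterGraph c) := by
  refine lt_distNum fun f hf => ?_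
  have himg : ∀ a', (c ⁻¹' {a'}).ncard = (c ⁻¹' {a}).ncard → f '' (c ⁻¹' {a'}) = Set.univ :=
    fun a' h => Set.eq_of_subset_of_ncard_le (Set.subset_univ _) <| by
      rw [Set.ncard_univ, Nat.card_fin, (hf.injOn_fiber a').ncard_image, h]
  exact not_isDistinguishing_of_image_eq hab ha (hf.injOn_fiber a) (hf.injOn_fiber b)
    (by rw [himg a rfl, himg b hsize.symm]) hf

end clusterGraph

section CyclicInterval

variable {M : ℕ}

lemma ZMod.natCast_injOn_range : Set.InjOn (Nat.cast : ℕ → ZMod M) (Finset.range M) :=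
  fun u hu v hv h => by
    rw [← ZMod.val_cast_of_lt (Finset.mem_range.1 hu), h,
      ZMod.val_cast_of_lt (Finset.mem_range.1 hv)]

def cyclicInterval (s : ZMod M) (m : ℕ) : Finset (ZMod M) :=
  (Finset.range m).image fun r : ℕ => s + r

lemma mem_cyclicInterval {s x : ZMod M} {m : ℕ} :
    x ∈ cyclicInterval s m ↔ ∃ r < m, s + r = x := by
  simp [cyclicInterval]

lemma card_cyclicInterval (s : ZMod M) {m : ℕ} (hm : m ≤ M) : (cyclicInterval s m).card = m := by
  rw [cyclicInterval, Finset.card_image_of_injOn, Finset.card_range]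
  intro u hu v hv h
  exact ZMod.natCast_injOn_range (Finset.range_subset_range.2 hm hu)
    (Finset.range_subset_range.2 hm hv) (add_left_cancel h)

/-- If `t = s + j` with `0 < j < m`, then `t - 1` lies in the interval starting at `s` but,
since `m < M`, not in the one starting at `t`. -/
lemma cyclicInterval_left_injective {m : ℕ} (hm₀ : 0 < m) (hmM : m < M) :
    Function.Injective fun s : ZMod M => cyclicInterval s m := by
  intro s t (hst : cyclicInterval s m = cyclicInterval t m)
  obtain ⟨j, hj, rfl⟩ : ∃ j < m, s + j = t :=
    mem_cyclicInterval.1 (hst ▸ mem_cyclicInterval.2 ⟨0, hm₀, by simp⟩)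
  obtain rfl | hj₀ := Nat.eq_zero_or_pos j
  · simp
  obtain ⟨i, hi, hi'⟩ : ∃ i < m, s + j + i = s + (j - 1 : ℕ) :=
    mem_cyclicInterval.1 (hst ▸ mem_cyclicInterval.2 ⟨j - 1, by omega, rfl⟩)
  have hzero : ((i + 1 : ℕ) : ZMod M) = 0 := by
    rw [Nat.cast_sub hj₀] at hi'
    push_cast
    linear_combination hi'
  have := Nat.le_of_dvd (Nat.succ_pos i) ((ZMod.natCast_eq_zero_iff _ _).1 hzero)
  omega

end CyclicInterval

lemma Set.ncard_preimage_comp_val (c : W → C) (s : Set W) (a : C) :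
    ((c ∘ Subtype.val : s → C) ⁻¹' {a}).ncard = (c ⁻¹' {a} ∩ s).ncard := by
  rw [Set.preimage_comp, ← Set.ncard_image_of_injective _ Subtype.val_injective,
    Subtype.image_preimage_coe, Set.inter_comm]

namespace clusterGraph

variable [Finite W] {n : ℕ} {c : W → Fin n}

/-- Colour class `a` receives the labels `cyclicInterval a m_a`, where `m_a` is its size. -/
lemma distNum_le {M : ℕ} [NeZero M] (hn : n ≤ M) (hle : ∀ a, (c ⁻¹' {a}).ncard ≤ M)
    (hsame : ∀ a b, a ≠ b → (c ⁻¹' {a}).ncard = (c ⁻¹' {b}).ncard →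
      0 < (c ⁻¹' {a}).ncard ∧ (c ⁻¹' {a}).ncard < M) :
    distNum (clusterGraph c) ≤ M := by
  let T : Fin n → Finset (ZMod M) := fun a => cyclicInterval (a : ℕ) (c ⁻¹' {a}).ncard
  have hcard : ∀ a, (T a).card = (c ⁻¹' {a}).ncard := fun a => card_cyclicInterval _ (hle a)
  have hT : Function.Injective T := by
    intro a b hab
    by_contra hne
    have hsize : (c ⁻¹' {a}).ncard = (c ⁻¹' {b}).ncard := by rw [← hcard, hab, hcard]
    obtain ⟨hpos, hlt⟩ := hsame a b hne hsize
    simp only [T, hsize] at hab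
    refine hne (Fin.ext (ZMod.natCast_injOn_range ?_ ?_
      (cyclicInterval_left_injective (hsize ▸ hpos) (hsize ▸ hlt) hab))) <;>
    simp only [Finset.coe_range, Set.mem_Iio] <;> omega
  obtain ⟨f, hf⟩ := exists_isDistinguishing_of_finset T hT hcard
  simpa using distNum_le_card hf

lemma distNum_eq_of_two_largest {m : ℕ} (hn : n ≤ m + 1) (hle : ∀ a, (c ⁻¹' {a}).ncard ≤ m)
    (hpos : ∀ a, 0 < (c ⁻¹' {a}).ncard) {a b : Fin n} (hab : a ≠ b)
    (ha : (c ⁻¹' {a}).ncard = m) (hb : (c ⁻¹' {b}).ncard = m) :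
    distNum (clusterGraph c) = m + 1 := by
  refine le_antisymm (distNum_le hn (fun a => (hle a).trans m.le_succ) ?_) ?_
  · exact fun a _ _ _ => ⟨hpos a, Nat.lt_succ_of_le (hle a)⟩
  · have := ncard_fiber_lt_distNum hab (Set.nonempty_of_ncard_ne_zero (hpos a).ne')
      (ha.trans hb.symm)
    omega

lemma distNum_eq_of_unique_largest {m : ℕ} (hn : n ≤ m) {a : Fin n} (ha : (c ⁻¹' {a}).ncard = m)
    (hlt : ∀ b ≠ a, 0 < (c ⁻¹' {b}).ncard ∧ (c ⁻¹' {b}).ncard < m) :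
    distNum (clusterGraph c) = m := by
  have : NeZero m := ⟨by have := a.isLt; omega⟩
  refine le_antisymm (distNum_le hn (fun b => ?_) fun b b' hbb' hsize => ?_) ?_
  · rcases eq_or_ne b a with rfl | hb
    · exact ha.le
    · exact (hlt b hb).2.le
  · rcases eq_or_ne b a with rfl | hb
    · exact hsize ▸ hlt b' hbb'.symm
    · exact hlt b hb
  · exact ha ▸ ncard_fiber_le_distNum a

lemma ncard_fiber_inter_compl (S : Set W) (a : Fin n) :
    (c ⁻¹' {a} ∩ Sᶜ).ncard + (c ⁻¹' {a} ∩ S).ncard = (c ⁻¹' {a}).ncard := by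
  rw [add_comm, ← Set.sdiff_eq]
  exact Set.ncard_inter_add_ncard_sdiff_eq_ncard _ _

lemma distNum_induce_compl {m : ℕ} (hc : ∀ a, (c ⁻¹' {a}).ncard = m) (hn : n ≤ m + 1)
    {S : Set W} (hSn : S.ncard + 2 ≤ n) (hSm : S.ncard < m) :
    distNum ((clusterGraph c).induce Sᶜ) = m + 1 := by
  have hsize : ∀ a, (c ⁻¹' {a} ∩ Sᶜ).ncard + (c ⁻¹' {a} ∩ S).ncard = m := fun a =>
    (ncard_fiber_inter_compl S a).trans (hc a)
  have hdamaged : ∀ a, (c ⁻¹' {a} ∩ S).ncard ≤ S.ncard := fun a =>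
    Set.ncard_le_ncard Set.inter_subset_right
  obtain ⟨a, b, ha, hb, hab⟩ : ∃ a b, a ∈ (c '' S)ᶜ ∧ b ∈ (c '' S)ᶜ ∧ a ≠ b := by
    refine (Set.one_lt_ncard_iff (Set.toFinite _)).1 ?_
    have := Set.ncard_image_le (f := c) (s := S)
    rw [Set.ncard_compl, Nat.card_fin]
    omega
  have hintact : ∀ a ∈ (c '' S)ᶜ, (c ⁻¹' {a} ∩ S).ncard = 0 := fun a ha => by
    rw [Set.ncard_eq_zero, Set.eq_empty_iff_forall_notMem]
    exact fun x hx => ha ⟨x, hx.2, hx.1⟩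
  rw [induce]
  refine distNum_eq_of_two_largest hn (fun a => ?_) (fun a => ?_) hab ?_ ?_ <;>
  simp only [Set.ncard_preimage_comp_val]
  · have := hsize a; omega
  · have := hsize a; have := hdamaged a; omega
  · have := hsize a; have := hintact a ha; omega
  · have := hsize b; have := hintact b hb; omega

end clusterGraph

lemma stD_eq_of_forall_ncard_lt {G : SimpleGraph V} {k : ℕ} {S₀ : Set V} (hS₀ : S₀ ≠ Set.univ)
    (hcard : S₀.ncard = k) (hne : distNum (G.induce S₀ᶜ) ≠ distNum G)
    (hlt : ∀ S : Set V, S ≠ Set.univ → S.ncard < k → distNum (G.induce Sᶜ) = distNum G) :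
    stD G = k :=
  le_antisymm (Nat.sInf_le ⟨S₀, hS₀, hcard, hne⟩) <|
    le_csInf ⟨k, S₀, hS₀, hcard, hne⟩ fun _ ⟨S, hS, hSc, hSne⟩ =>
      not_lt.1 fun h => hSne (hlt S hS (hSc ▸ h))

lemma Set.ncard_fst_preimage_singleton {α β : Type*} [Finite β] (a : α) :
    (Prod.fst ⁻¹' {a} : Set (α × β)).ncard = Nat.card β := by
  rw [Set.preimage_fst_singleton_eq_range, Set.ncard_range_of_injective (Prod.mk_right_injective a)]

section DisjointCliques

variable {k : ℕ}

def partialTransversal (k : ℕ) : Set (Fin (k + 1) × Fin (k + 1)) :=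
  ({Fin.last k} : Set (Fin (k + 1)))ᶜ ×ˢ {0}

lemma partialTransversal_ne_univ : partialTransversal k ≠ Set.univ :=
  fun h => (h ▸ Set.mem_univ (Fin.last k, 0) : (Fin.last k, 0) ∈ partialTransversal k).1 rfl

lemma ncard_partialTransversal : (partialTransversal k).ncard = k := by
  rw [partialTransversal, Set.ncard_prod, Set.ncard_compl, Set.ncard_singleton,
    Set.ncard_singleton, Nat.card_fin]
  simp

lemma fst_preimage_inter_partialTransversal (a : Fin (k + 1)) :
    (Prod.fst ⁻¹' {a} ∩ partialTransversal k).ncard = if a = Fin.last k then 0 else 1 := by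
  split_ifs with ha
  · rw [Set.ncard_eq_zero, Set.eq_empty_iff_forall_notMem]
    rintro ⟨x, y⟩ ⟨rfl, hx, -⟩
    exact hx ha
  · rw [Set.ncard_eq_one]
    refine ⟨(a, 0), ?_⟩
    ext ⟨x, y⟩
    simp +contextual [partialTransversal, ha]

lemma distNum_disjointCliques (hk : 1 ≤ k) :
    distNum (clusterGraph (Prod.fst : Fin (k + 1) × Fin (k + 1) → Fin (k + 1))) = k + 2 :=
  clusterGraph.distNum_eq_of_two_largest (Nat.le_succ _)
    (fun a => (Set.ncard_fst_preimage_singleton a).trans_le (Nat.card_fin _).le)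
    (fun a => by simp [Set.ncard_fst_preimage_singleton])
    (a := 0) (b := Fin.last k) (by simp [Fin.ext_iff]; omega)
    (by simp [Set.ncard_fst_preimage_singleton]) (by simp [Set.ncard_fst_preimage_singleton])

lemma distNum_disjointCliques_induce_compl {S : Set (Fin (k + 1) × Fin (k + 1))}
    (hS : S.ncard < k) :
    distNum ((clusterGraph Prod.fst).induce Sᶜ) = k + 2 :=
  clusterGraph.distNum_induce_compl (c := Prod.fst) (m := k + 1)
    (fun a => by simp [Set.ncard_fst_preimage_singleton]) (Nat.le_succ _) (by omega) (by omega)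

lemma distNum_disjointCliques_induce_partialTransversal_compl (hk : 1 ≤ k) :
    distNum ((clusterGraph Prod.fst).induce (partialTransversal k)ᶜ) = k + 1 := by
  have hsize := clusterGraph.ncard_fiber_inter_compl (c := Prod.fst) (partialTransversal k)
  rw [clusterGraph.induce]
  refine clusterGraph.distNum_eq_of_unique_largest le_rfl (a := Fin.last k) ?_ fun b hb => ?_ <;>
  simp only [Set.ncard_preimage_comp_val]
  · have := hsize (Fin.last k)
    rw [fst_preimage_inter_partialTransversal, if_pos rfl, Set.ncard_fst_preimage_singleton] at this
    simpa using this
  · have := hsize b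
    rw [fst_preimage_inter_partialTransversal, if_neg hb, Set.ncard_fst_preimage_singleton] at this
    simp at this
    omega

end DisjointCliques

/-- Every positive integer is the distinguishing stability of some graph. -/
theorem exists_graph_stD_eq (k : ℕ) (hk : 1 ≤ k) :
    ∃ (V : Type) (_ : Finite V) (G : SimpleGraph V), 2 ≤ Nat.card V ∧ stD G = k := by
  refine ⟨_, inferInstance, clusterGraph (Prod.fst : Fin (k + 1) × Fin (k + 1) → Fin (k + 1)),
    ?_, ?_⟩
  · simp only [Nat.card_prod, Nat.card_fin]
    nlinarith
  · refine stD_eq_of_forall_ncard_lt partialTransversal_ne_univ ncard_partialTransversal ?_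
      fun S _ hS => ?_
    · rw [distNum_disjointCliques_induce_partialTransversal_compl hk, distNum_disjointCliques hk]
      omega
    · rw [distNum_disjointCliques_induce_compl hS, distNum_disjointCliques hk]
end

section
/- Let G be a graph with at least 3 vertices and let v be a vertex of G. Then st_D(G) ≤ st_D(G − v) + 1, where G − v is the induced subgraph obtained by deleting v. -/
open SimpleGraph

/-!
If deleting `v` already changes the distinguishing number, `{v}` witnesses `st_D(G) ≤ 1`.
Otherwise let `S` be a minimum set whose deletion changes `D(G - v)`; then
`G - (S ∪ {v}) ≅ (G - v) - S` has distinguishing number different from `D(G - v) = D(G)`, so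
`st_D(G) ≤ |S| + 1`. Such an `S` exists because `G - v` has at least two vertices: keep one vertex
if `D ≠ 1`, and keep two if `D = 1`, since the swap of two vertices is an automorphism.
-/

namespace SimpleGraph

variable {V W : Type*}

def IsDistinguishing {d : ℕ} (G : SimpleGraph V) (f : V → Fin d) : Prop :=
  ∀ φ : G ≃g G, (∀ x, f (φ x) = f x) → ∀ x, φ x = x

lemma distNum_eq_sInf (G : SimpleGraph V) :
    distNum G = sInf {d : ℕ | ∃ f : V → Fin d, G.IsDistinguishing f} := rfl

lemma IsDistinguishing.comp_iso {G : SimpleGraph V} {H : SimpleGraph W} {d : ℕ} {f : V → Fin d}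
    (hf : G.IsDistinguishing f) (e : G ≃g H) : H.IsDistinguishing (f ∘ e.symm) := by
  intro ψ hψ w
  have hconj := hf (e.trans (ψ.trans e.symm)) (fun x => by simpa using hψ (e x)) (e.symm w)
  simpa using congrArg e hconj

lemma distNum_eq_of_iso {G : SimpleGraph V} {H : SimpleGraph W} (e : G ≃g H) :
    distNum G = distNum H := by
  simp only [distNum_eq_sInf]
  congr 1
  ext d
  exact ⟨fun ⟨f, hf⟩ => ⟨_, hf.comp_iso e⟩, fun ⟨f, hf⟩ => ⟨_, hf.comp_iso e.symm⟩⟩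

lemma distNum_eq_one_iff [Nonempty V] (G : SimpleGraph V) :
    distNum G = 1 ↔ ∀ φ : G ≃g G, ∀ x, φ x = x := by
  have h0 : ∀ f : V → Fin 0, ¬ G.IsDistinguishing f :=
    fun f _ => Fin.elim0 (f (Classical.arbitrary V))
  constructor
  · intro h φ
    obtain ⟨f, hf⟩ : ∃ f : V → Fin 1, G.IsDistinguishing f :=
      h ▸ Nat.sInf_mem (Nat.nonempty_of_sInf_eq_succ h)
    exact hf φ fun _ => Subsingleton.elim _ _
  · intro h
    have h1 : ∃ f : V → Fin 1, G.IsDistinguishing f := ⟨fun _ => 0, fun φ _ => h φ⟩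
    refine le_antisymm (Nat.sInf_le h1) (Nat.one_le_iff_ne_zero.mpr fun h' => ?_)
    rcases Nat.sInf_eq_zero.mp h' with ⟨f, hf⟩ | hempty
    · exact h0 f hf
    · exact hempty.subset h1

lemma distNum_induce_pair_ne_one (G : SimpleGraph V) {a b : V} (hab : a ≠ b) :
    distNum (G.induce {a, b}) ≠ 1 := by
  classical
  set x : ({a, b} : Set V) := ⟨a, by simp⟩
  set y : ({a, b} : Set V) := ⟨b, by simp⟩
  have hxy : x ≠ y := fun h => hab (congrArg Subtype.val h)
  have hxy_cases : ∀ z, z = x ∨ z = y := by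
    rintro ⟨z, hz⟩
    rcases hz with rfl | rfl
    exacts [.inl rfl, .inr rfl]
  let swap : G.induce {a, b} ≃g G.induce {a, b} :=
    ⟨Equiv.swap x y, fun {u w} => by
      rcases hxy_cases u with rfl | rfl <;> rcases hxy_cases w with rfl | rfl <;>
        simp [adj_comm]⟩
  intro h
  exact hxy.symm ((Equiv.swap_apply_left x y).symm.trans ((distNum_eq_one_iff _).mp h swap x))

lemma stD_le_ncard (G : SimpleGraph V) {S : Set V} (hS : S ≠ Set.univ)
    (hD : distNum (G.induce Sᶜ) ≠ distNum G) : stD G ≤ S.ncard :=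
  Nat.sInf_le ⟨S, hS, rfl, hD⟩

lemma exists_ncard_eq_stD [Nontrivial V] (G : SimpleGraph V) :
    ∃ S : Set V, S ≠ Set.univ ∧ S.ncard = stD G ∧ distNum (G.induce Sᶜ) ≠ distNum G := by
  obtain ⟨a, b, hab⟩ := exists_pair_ne V
  refine Nat.sInf_mem (s := {k | ∃ S : Set V, S ≠ Set.univ ∧ S.ncard = k ∧
    distNum (G.induce Sᶜ) ≠ distNum G}) ?_
  by_cases hG : distNum G = 1
  · refine ⟨_, {a, b}ᶜ, fun h => ?_, rfl, ?_⟩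
    · simpa using congrArg (a ∈ ·) h
    · rw [compl_compl, hG]
      exact G.distNum_induce_pair_ne_one hab
  · refine ⟨_, {a}ᶜ, fun h => ?_, rfl, ?_⟩
    · simpa using congrArg (a ∈ ·) h
    · rw [compl_compl, (distNum_eq_one_iff _).mpr fun φ x => Subsingleton.elim _ _]
      exact Ne.symm hG

def induceInduceIso (G : SimpleGraph V) {s u : Set V} {t : Set s}
    (hu : ∀ x, x ∈ u ↔ ∃ hx : x ∈ s, ⟨x, hx⟩ ∈ t) : (G.induce s).induce t ≃g G.induce u :=
  ⟨(Equiv.subtypeSubtypeEquivSubtypeExists _ _).trans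
    (Equiv.subtypeEquivRight fun x => (hu x).symm), Iff.rfl⟩

theorem stD_le_stD_induce_compl_add [Finite V] (G : SimpleGraph V) (T : Set V)
    [Nontrivial ↥Tᶜ] : stD G ≤ stD (G.induce Tᶜ) + T.ncard := by
  by_cases hD : distNum (G.induce Tᶜ) = distNum G
  · obtain ⟨S, hS, hScard, hSD⟩ := (G.induce Tᶜ).exists_ncard_eq_stD
    have hmem : ∀ x, x ∈ (T ∪ Subtype.val '' S)ᶜ ↔ ∃ hx : x ∈ Tᶜ, ⟨x, hx⟩ ∈ Sᶜ := by
      intro x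
      simp only [Set.mem_compl_iff, Set.mem_union, Set.mem_image, not_or, not_exists, not_and]
      exact ⟨fun ⟨hT, hS⟩ => ⟨hT, fun hxS => hS ⟨x, hT⟩ hxS rfl⟩,
        fun ⟨hT, hxS⟩ => ⟨hT, fun y hy hyx => hxS (by subst hyx; exact hy)⟩⟩
    have hcard : (T ∪ Subtype.val '' S).ncard = T.ncard + S.ncard := by
      rw [Set.ncard_union_eq, Set.ncard_image_of_injective _ Subtype.val_injective]
      exact Set.disjoint_right.mpr fun _ ⟨y, _, hyx⟩ => hyx ▸ y.2
    have hne : T ∪ Subtype.val '' S ≠ Set.univ := by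
      obtain ⟨w, hw⟩ := Set.ne_univ_iff_exists_notMem S |>.mp hS
      exact Set.ne_univ_iff_exists_notMem _ |>.mpr ⟨w, (hmem w).mpr ⟨w.2, hw⟩⟩
    have hdist : distNum (G.induce (T ∪ Subtype.val '' S)ᶜ) ≠ distNum G := by
      rw [← distNum_eq_of_iso (G.induceInduceIso hmem), ← hD]
      exact hSD
    calc stD G ≤ (T ∪ Subtype.val '' S).ncard := G.stD_le_ncard hne hdist
      _ = stD (G.induce Tᶜ) + T.ncard := by rw [hcard, hScard, add_comm]
  · obtain ⟨⟨w, hw⟩, -⟩ := exists_pair_ne ↥Tᶜ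
    have hT : T ≠ Set.univ := fun h => hw (h ▸ Set.mem_univ w)
    exact (G.stD_le_ncard hT hD).trans (Nat.le_add_left _ _)

end SimpleGraph

/-- $st_D(G) \le st_D(G - v) + 1$. -/
theorem stD_le_stD_deleteVert {V : Type*} [Fintype V] (G : SimpleGraph V)
    (h : 3 ≤ Fintype.card V) (v : V) :
    stD G ≤ stD (G.induce {x | x ≠ v}) + 1 := by
  have hcard : 1 < ({v}ᶜ : Set V).ncard := by
    rw [Set.ncard_compl, Set.ncard_singleton, Nat.card_eq_fintype_card]
    omega
  have : Nontrivial ↥({v}ᶜ : Set V) :=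
    Set.nontrivial_coe_sort.mpr (Set.one_lt_ncard_iff_nontrivial.mp hcard)
  have key := G.stD_le_stD_induce_compl_add {v}
  rwa [Set.ncard_singleton] at key
end
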